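/- arXiv:math/9607220 — 5 statements merged into one kernel-verified Lean document; each statement's English description precedes it below -/
import Mathlib

section
/- Let G be a group acting on a set X, and let K be a subgroup of the group of bijections (permutations) of X, with composition as the group operation. Define H = {a ∈ G : every φ ∈ K is affine for a via some b ∈ G}. Then H is a subgroup of G, and moreover for every φ ∈ K and every a ∈ H there exists b ∈ H such that φ is affine for a via b (i.e., K is affine for H via H). -/
/-!
The elements `a` for which a fixed map is affine form a subgroup (conjugate a relation
`φ (a • x) = b • φ x` by `a⁻¹`), so `H` is an intersection of subgroups. If `φ ∈ K` is affine
for `a` via `b`, then `b` acts as `φ ∘ a ∘ φ⁻¹`; since `ψ * φ ∈ K` is affine for `a` via some `c`,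
each `ψ ∈ K` is affine for `b` via `c`, so `b ∈ H`.
-/

section

variable {G X : Type*} [Group G] [MulAction G X]

def IsAffineVia (φ : X → X) (a b : G) : Prop :=
  ∀ x, φ (a • x) = b • φ x

namespace IsAffineVia

theorem one (φ : X → X) : IsAffineVia φ (1 : G) 1 := fun x => by
  simp only [one_smul]

theorem mul {φ : X → X} {a₁ a₂ b₁ b₂ : G} (h₁ : IsAffineVia φ a₁ b₁)
    (h₂ : IsAffineVia φ a₂ b₂) : IsAffineVia φ (a₁ * a₂) (b₁ * b₂) := fun x => by
  rw [mul_smul, h₁, h₂, mul_smul]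

theorem inv {φ : X → X} {a b : G} (h : IsAffineVia φ a b) : IsAffineVia φ a⁻¹ b⁻¹ :=
  fun x => by rw [eq_inv_smul_iff, ← h, smul_inv_smul]

theorem of_mul {φ ψ : Equiv.Perm X} {a b c : G} (hφ : IsAffineVia φ a b)
    (hψφ : IsAffineVia (ψ * φ) a c) : IsAffineVia ψ b c := fun y => by
  have hb : b • y = φ (a • φ.symm y) := by rw [hφ, Equiv.apply_symm_apply]
  simpa only [Equiv.Perm.mul_apply, Equiv.apply_symm_apply, ← hb] using hψφ (φ.symm y)

end IsAffineVia

variable (G) in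
def affineSubgroup (φ : X → X) : Subgroup G where
  carrier := {a | ∃ b, IsAffineVia φ a b}
  one_mem' := ⟨1, IsAffineVia.one φ⟩
  mul_mem' := fun ⟨b₁, h₁⟩ ⟨b₂, h₂⟩ => ⟨b₁ * b₂, h₁.mul h₂⟩
  inv_mem' := fun ⟨b, h⟩ => ⟨b⁻¹, h.inv⟩

theorem mem_affineSubgroup {φ : X → X} {a : G} :
    a ∈ affineSubgroup G φ ↔ ∃ b, IsAffineVia φ a b :=
  Iff.rfl

end

/-- Let `G` act on a set `X` and let `K` be a subgroup of the
permutation group of `X` (with composition as the group operation).  The set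
`H = {a ∈ G | every φ ∈ K is affine for a via some b ∈ G}` is a subgroup of `G`,
and moreover `K` is affine for `H` via `H`: for every `φ ∈ K` and `a ∈ H` there
is some `b ∈ H` such that `φ (a • x) = b • φ x` for all `x`. -/
theorem affine_via_subgroup {G X : Type*} [Group G] [MulAction G X]
    (K : Subgroup (Equiv.Perm X)) :
    ∃ H : Subgroup G,
      (∀ a : G, a ∈ H ↔ ∀ φ ∈ K, ∃ b : G, ∀ x : X, φ (a • x) = b • φ x) ∧
      (∀ φ ∈ K, ∀ a ∈ H, ∃ b ∈ H, ∀ x : X, φ (a • x) = b • φ x) := by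
  let H : Subgroup G := ⨅ φ ∈ K, affineSubgroup G φ
  have mem_H (a : G) : a ∈ H ↔ ∀ φ ∈ K, ∃ b, IsAffineVia φ a b := by
    simp only [H, Subgroup.mem_iInf, mem_affineSubgroup]
  refine ⟨H, mem_H, fun φ hφ a ha => ?_⟩
  obtain ⟨b, hb⟩ := (mem_H a).1 ha φ hφ
  refine ⟨b, (mem_H b).2 fun ψ hψ => ?_, hb⟩
  obtain ⟨c, hc⟩ := (mem_H a).1 ha (ψ * φ) (K.mul_mem hψ hφ)
  exact ⟨c, hb.of_mul hc⟩
end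

section
/- Let G be a metrizable topological group acting continuously on a metric space X equipped with its Borel σ-algebra and a finite measure μ, such that for each g ∈ G the map x ↦ g • x is measure-preserving. Let A ⊆ G and let B ⊆ G be compact. Let φₙ, φ : X → X be Borel measurable maps such that φₙ → φ in measure (with respect to μ). If for every n and every a ∈ A there exists b ∈ B such that φₙ(a • x) = b • φₙ(x) for μ-almost every x, then for every a ∈ A there exists b ∈ B such that φ(a • x) = b • φ(x) for μ-almost every x. -/
/-!
Fix `a ∈ A` and choose `bₙ ∈ B` with `φₙ (a • x) = bₙ • φₙ x` a.e. By compactness some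
subsequence of `bₙ` converges to a point `c ∈ B`, and along a further subsequence `φₙ → φ`
almost everywhere. Translation by `a` preserves null sets, so also `φₙ (a • x) → φ (a • x)`
a.e., while continuity of the action gives `bₙ • φₙ x → c • φ x`; uniqueness of limits
yields `φ (a • x) = c • φ x` a.e.
-/

open MeasureTheory Filter Topology

theorem MeasureTheory.TendstoInMeasure.exists_subseq_tendsto_ae_and_tendsto
    {α E M : Type*} [MeasurableSpace α] [PseudoEMetricSpace E] [TopologicalSpace M]
    [FirstCountableTopology M] {μ : Measure α} {f : ℕ → α → E} {g : α → E}
    (hfg : TendstoInMeasure μ f atTop g) {B : Set M} (hB : IsCompact B) {b : ℕ → M}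
    (hbB : ∀ n, b n ∈ B) :
    ∃ c ∈ B, ∃ ns : ℕ → ℕ, Tendsto (b ∘ ns) atTop (𝓝 c) ∧
      ∀ᵐ x ∂μ, Tendsto (fun i => f (ns i) x) atTop (𝓝 (g x)) := by
  obtain ⟨c, hcB, ks, hks, hbc⟩ := hB.tendsto_subseq hbB
  obtain ⟨ms, hms, hae⟩ := (hfg.comp hks.tendsto_atTop).exists_seq_tendsto_ae
  exact ⟨c, hcB, ks ∘ ms, hbc.comp hms.tendsto_atTop, hae⟩

theorem MeasureTheory.ae_apply_eq_smul_of_tendsto_ae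
    {α M E : Type*} [MeasurableSpace α] [TopologicalSpace M] [TopologicalSpace E] [T2Space E]
    [SMul M E] [ContinuousSMul M E] {μ : Measure α} {T : α → α}
    (hT : Measure.QuasiMeasurePreserving T μ μ) {f : ℕ → α → E} {g : α → E}
    (hfg : ∀ᵐ x ∂μ, Tendsto (fun n => f n x) atTop (𝓝 (g x)))
    {b : ℕ → M} {c : M} (hbc : Tendsto b atTop (𝓝 c))
    (hf : ∀ n, ∀ᵐ x ∂μ, f n (T x) = b n • f n x) :
    ∀ᵐ x ∂μ, g (T x) = c • g x := by
  have hfg_T : ∀ᵐ x ∂μ, Tendsto (fun n => f n (T x)) atTop (𝓝 (g (T x))) := hT.ae hfg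
  filter_upwards [hfg, hfg_T, ae_all_iff.2 hf] with x hx hTx hfx
  refine tendsto_nhds_unique hTx ?_
  simpa only [hfx] using hbc.smul hx

theorem ae_affine_of_tendstoInMeasure_general {G X : Type*} [Group G] [TopologicalSpace G]
    [TopologicalSpace.MetrizableSpace G]
    [MetricSpace X] [MeasurableSpace X]
    [MulAction G X] [ContinuousSMul G X]
    (μ : Measure X)
    (hmp : ∀ g : G, MeasurePreserving (fun x : X => g • x) μ μ)
    (A B : Set G) (hB : IsCompact B)
    (φn : ℕ → X → X) (φ : X → X)
    (hconv : TendstoInMeasure μ φn atTop φ)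
    (haff : ∀ n, ∀ a ∈ A, ∃ b ∈ B, ∀ᵐ x ∂μ, φn n (a • x) = b • φn n x) :
    ∀ a ∈ A, ∃ b ∈ B, ∀ᵐ x ∂μ, φ (a • x) = b • φ x := by
  intro a ha
  choose b hbB hb using fun n => haff n a ha
  obtain ⟨c, hcB, ns, hbc, hφ_ae⟩ := hconv.exists_subseq_tendsto_ae_and_tendsto hB hbB
  exact ⟨c, hcB, ae_apply_eq_smul_of_tendsto_ae (hmp a).quasiMeasurePreserving hφ_ae hbc
    fun i => hb (ns i)⟩

/-- Let a metrizable topological group `G` act continuously on a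
metric space `X` with its Borel σ-algebra and a finite measure `μ`, each translation
being measure-preserving.  Let `A ⊆ G`, let `B ⊆ G` be compact, and let
`φₙ → φ` in measure, all maps Borel measurable.  If each `φₙ` is affine for `A`
via `B` (up to a.e. equality), then so is `φ`. -/
theorem ae_affine_of_tendstoInMeasure {G X : Type*} [Group G] [TopologicalSpace G]
    [IsTopologicalGroup G] [TopologicalSpace.MetrizableSpace G]
    [MetricSpace X] [MeasurableSpace X] [BorelSpace X]
    [MulAction G X] [ContinuousSMul G X]
    (μ : Measure X) [IsFiniteMeasure μ]
    (hmp : ∀ g : G, MeasurePreserving (fun x : X => g • x) μ μ)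
    (A B : Set G) (hB : IsCompact B)
    (φn : ℕ → X → X) (φ : X → X)
    (hφn : ∀ n, Measurable (φn n)) (hφ : Measurable φ)
    (hconv : TendstoInMeasure μ φn atTop φ)
    (haff : ∀ n, ∀ a ∈ A, ∃ b ∈ B, ∀ᵐ x ∂μ, φn n (a • x) = b • φn n x) :
    ∀ a ∈ A, ∃ b ∈ B, ∀ᵐ x ∂μ, φ (a • x) = b • φ x :=
  ae_affine_of_tendstoInMeasure_general μ hmp A B hB φn φ hconv haff
end

section
/- Let G be a topological group acting continuously on a Polish space X (a separable, completely metrizable metric space) equipped with its Borel σ-algebra and a finite Borel measure μ, such that for each g ∈ G the map x ↦ g • x is measure-preserving. Let Y be a separable metric space and let φ : X → Y be Borel measurable. If aₙ → a in G, then the sequence of functions x ↦ φ(aₙ • x) converges in measure (with respect to μ) to the function x ↦ φ(a • x). -/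
/-!
Approximate `φ` in measure by simple functions `ψ`. For a simple function, `ψ (aₙ • x) ≠ ψ (a • x)`
only on the union of the symmetric differences `aₙ⁻¹ • ψ⁻¹{y} ∆ a⁻¹ • ψ⁻¹{y}` over the finitely
many values `y`, and each of these has measure tending to `0` because translations of a set of
finite measure depend continuously on the translating map (this needs inner regularity of `μ`,
which holds on Polish spaces). Since the translations preserve `μ`, the error `dist (φ, ψ)` is
transported unchanged to both `x ↦ φ (aₙ • x)` and `x ↦ φ (a • x)`, and a `3ε` argument concludes.
-/

open MeasureTheory Filter Set
open scoped ENNReal Topology symmDiff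

namespace MeasureTheory

section TendstoInMeasure

variable {ι X E : Type*} [MeasurableSpace X] [PseudoEMetricSpace E] {μ : Measure X}
  {l : Filter ι}

theorem measure_setOf_add_le_edist_le (μ : Measure X) (u v w : X → E) (ε₁ ε₂ : ℝ≥0∞) :
    μ {x | ε₁ + ε₂ ≤ edist (u x) (w x)} ≤
      μ {x | ε₁ ≤ edist (u x) (v x)} + μ {x | ε₂ ≤ edist (v x) (w x)} := by
  refine (measure_mono fun x hx => ?_).trans (measure_union_le _ _)
  by_contra hxuv
  simp only [mem_union, mem_ofPred_eq, not_or, not_le] at hxuv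
  exact (edist_triangle _ _ _).trans_lt (ENNReal.add_lt_add hxuv.1 hxuv.2) |>.not_ge hx

theorem tendstoInMeasure_of_tendsto_measure_ne {F : ι → X → E} {F₀ : X → E}
    (h : Tendsto (fun i => μ {x | F i x ≠ F₀ x}) l (𝓝 0)) : TendstoInMeasure μ F l F₀ := by
  intro ε hε
  refine tendsto_of_tendsto_of_tendsto_of_le_of_le tendsto_const_nhds h (fun _ => zero_le)
    fun i => measure_mono fun x hx hxeq => ?_
  rw [mem_ofPred_eq, hxeq, edist_self] at hx
  exact hε.not_ge hx

theorem tendstoInMeasure_of_approx {F : ι → X → E} {F₀ : X → E}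
    (h : ∀ ε > 0, ∀ δ > 0, ∃ (G : ι → X → E) (G₀ : X → E), TendstoInMeasure μ G l G₀ ∧
      (∀ᶠ i in l, μ {x | ε ≤ edist (F i x) (G i x)} ≤ δ) ∧ μ {x | ε ≤ edist (G₀ x) (F₀ x)} ≤ δ) :
    TendstoInMeasure μ F l F₀ := by
  intro ε hε
  rw [ENNReal.tendsto_nhds_zero]
  intro δ hδ
  have hε3 : 0 < ε / 3 := ENNReal.div_pos hε.ne' ENNReal.ofNat_ne_top
  have hδ3 : 0 < δ / 3 := ENNReal.div_pos hδ.ne' ENNReal.ofNat_ne_top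
  obtain ⟨G, G₀, hG, hFG, hG₀F₀⟩ := h (ε / 3) hε3 (δ / 3) hδ3
  filter_upwards [hFG, ENNReal.tendsto_nhds_zero.1 (hG (ε / 3) hε3) (δ / 3) hδ3]
    with i hFGi hGi
  calc μ {x | ε ≤ edist (F i x) (F₀ x)}
      = μ {x | ε / 3 + ε / 3 + ε / 3 ≤ edist (F i x) (F₀ x)} := by rw [ENNReal.add_thirds]
    _ ≤ μ {x | ε / 3 ≤ edist (F i x) (G i x)} + μ {x | ε / 3 ≤ edist (G i x) (G₀ x)} +
          μ {x | ε / 3 ≤ edist (G₀ x) (F₀ x)} := by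
        grw [measure_setOf_add_le_edist_le μ _ G₀, measure_setOf_add_le_edist_le μ _ (G i)]
    _ ≤ δ / 3 + δ / 3 + δ / 3 := by gcongr
    _ = δ := ENNReal.add_thirds δ

end TendstoInMeasure

theorem SimpleFunc.measure_comp_ne_le {X Y E : Type*} [MeasurableSpace X] [MeasurableSpace Y]
    (μ : Measure X) (ψ : SimpleFunc Y E) (u v : X → Y) :
    μ {x | ψ (u x) ≠ ψ (v x)} ≤
      ∑ y ∈ ψ.range, μ ((u ⁻¹' (ψ ⁻¹' {y})) ∆ (v ⁻¹' (ψ ⁻¹' {y}))) := by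
  refine (measure_mono fun x hx => ?_).trans (measure_biUnion_finset_le _ _)
  exact mem_biUnion (ψ.mem_range_self (v x)) (Or.inr ⟨rfl, hx⟩)

section ContinuousMap

variable {ι X Y E : Type*}
  [TopologicalSpace X] [MeasurableSpace X] [BorelSpace X] [R1Space X]
  [TopologicalSpace Y] [MeasurableSpace Y] [BorelSpace Y] [R1Space Y]
  {μ : Measure X} {ν : Measure Y} [μ.InnerRegularCompactLTTop] [IsFiniteMeasure ν]
  {l : Filter ι} {f : ι → C(X, Y)} {g : C(X, Y)}

theorem SimpleFunc.tendstoInMeasure_comp [PseudoEMetricSpace E] (ψ : SimpleFunc Y E)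
    (hfg : Tendsto f l (𝓝 g)) (hf : ∀ᶠ i in l, MeasurePreserving (f i) μ ν)
    (hg : MeasurePreserving g μ ν) :
    TendstoInMeasure μ (fun i x => ψ (f i x)) l (fun x => ψ (g x)) := by
  refine tendstoInMeasure_of_tendsto_measure_ne ?_
  have hsum : Tendsto (fun i => ∑ y ∈ ψ.range,
      μ ((f i ⁻¹' (ψ ⁻¹' {y})) ∆ (g ⁻¹' (ψ ⁻¹' {y})))) l (𝓝 0) := by
    simpa using tendsto_finsetSum ψ.range fun y _ =>
      tendsto_measure_symmDiff_preimage_nhds_zero hfg hf hg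
        (ψ.measurableSet_preimage {y}).nullMeasurableSet (measure_ne_top ν _)
  exact tendsto_of_tendsto_of_tendsto_of_le_of_le tendsto_const_nhds hsum (fun _ => zero_le)
    fun i => ψ.measure_comp_ne_le μ (f i) g

theorem tendstoInMeasure_comp_of_tendsto [PseudoEMetricSpace E] [SecondCountableTopology E]
    [MeasurableSpace E] [BorelSpace E] (hfg : Tendsto f l (𝓝 g))
    (hf : ∀ᶠ i in l, MeasurePreserving (f i) μ ν) (hg : MeasurePreserving g μ ν)
    {φ : Y → E} (hφ : Measurable φ) :
    TendstoInMeasure μ (fun i x => φ (f i x)) l (fun x => φ (g x)) := by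
  have hφs := hφ.stronglyMeasurable
  have happrox : TendstoInMeasure ν (fun k => hφs.approx k) atTop φ :=
    tendstoInMeasure_of_tendsto_ae (fun k => (hφs.approx k).aestronglyMeasurable)
      (ae_of_all _ hφs.tendsto_approx)
  refine tendstoInMeasure_of_approx fun ε hε δ hδ => ?_
  obtain ⟨k, hk⟩ := (ENNReal.tendsto_nhds_zero.1 (happrox ε hε) δ hδ).exists
  set ψ := hφs.approx k
  have hD : MeasurableSet {y | ε ≤ edist (ψ y) (φ y)} :=
    measurableSet_le measurable_const (ψ.measurable.edist hφ)
  have hψφ : ∀ u : C(X, Y), MeasurePreserving u μ ν →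
      μ {x | ε ≤ edist (ψ (u x)) (φ (u x))} ≤ δ := fun u hu =>
    (hu.measure_preimage hD.nullMeasurableSet).trans_le hk
  refine ⟨fun i x => ψ (f i x), fun x => ψ (g x), ψ.tendstoInMeasure_comp hfg hf hg, ?_, hψφ g hg⟩
  filter_upwards [hf] with i hfi
  simpa only [edist_comm] using hψφ (f i) hfi

end ContinuousMap

end MeasureTheory

theorem tendstoInMeasure_comp_smul_general {G X Y : Type*} [Group G] [TopologicalSpace G]
    [MetricSpace X] [TopologicalSpace.SeparableSpace X] [CompleteSpace X]
    [MeasurableSpace X] [BorelSpace X]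
    [MulAction G X] [ContinuousSMul G X]
    (μ : Measure X) [IsFiniteMeasure μ]
    (hmp : ∀ g : G, MeasurePreserving (fun x : X => g • x) μ μ)
    [MetricSpace Y] [TopologicalSpace.SeparableSpace Y]
    [MeasurableSpace Y] [BorelSpace Y]
    (φ : X → Y) (hφ : Measurable φ)
    (an : ℕ → G) (a : G) (ha : Tendsto an atTop (nhds a)) :
    TendstoInMeasure μ (fun n x => φ (an n • x)) atTop (fun x => φ (a • x)) := by
  let T : C(G, C(X, X)) := ContinuousMap.curry ⟨fun p : G × X => p.1 • p.2, continuous_smul⟩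
  exact tendstoInMeasure_comp_of_tendsto ((T.continuous.tendsto a).comp ha)
    (.of_forall fun n => hmp (an n)) (hmp a) hφ

/-- Let a topological group `G` act continuously on a Polish
space `X` (separable and completely metrizable) with its Borel σ-algebra and a
finite Borel measure `μ`, each translation being measure-preserving.  Let `Y` be
a separable metric space and `φ : X → Y` Borel measurable.  If `aₙ → a` in `G`,
then `x ↦ φ (aₙ • x)` converges in measure to `x ↦ φ (a • x)`. -/
theorem tendstoInMeasure_comp_smul {G X Y : Type*} [Group G] [TopologicalSpace G]
    [IsTopologicalGroup G]
    [MetricSpace X] [TopologicalSpace.SeparableSpace X] [CompleteSpace X]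
    [MeasurableSpace X] [BorelSpace X]
    [MulAction G X] [ContinuousSMul G X]
    (μ : Measure X) [IsFiniteMeasure μ]
    (hmp : ∀ g : G, MeasurePreserving (fun x : X => g • x) μ μ)
    [MetricSpace Y] [TopologicalSpace.SeparableSpace Y]
    [MeasurableSpace Y] [BorelSpace Y]
    (φ : X → Y) (hφ : Measurable φ)
    (an : ℕ → G) (a : G) (ha : Tendsto an atTop (nhds a)) :
    TendstoInMeasure μ (fun n x => φ (an n • x)) atTop (fun x => φ (a • x)) :=
  tendstoInMeasure_comp_smul_general μ hmp φ hφ an a ha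
end

section
/- Let G be a topological group acting continuously on a Polish space X (a separable, completely metrizable metric space) equipped with its Borel σ-algebra and a finite Borel measure μ, such that for each g ∈ G the map x ↦ g • x is measure-preserving. Let φ : X → X be Borel measurable. Suppose aₙ → a in G, bₙ → b in G, and for each n, φ(aₙ • x) = bₙ • φ(x) for μ-almost every x. Then φ(a • x) = b • φ(x) for μ-almost every x. -/
open MeasureTheory Filter

open Set Topology TopologicalSpace
open scoped symmDiff

/-! For open `U`, translation continuity of a finite measure on a Polish space (via tightness)
gives `μ ({x | φ (aₙ • x) ∈ U} ∆ {x | φ (a • x) ∈ U}) → 0`, while every `x` with `b • φ x ∈ U`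
eventually satisfies `bₙ • φ x ∈ U`. As the two families of sets agree a.e., `b • φ x ∈ U`
implies `φ (a • x) ∈ U` for a.e. `x`; letting `U` run over a countable basis of the T₁ space `X`
forces `φ (a • x) = b • φ x`. -/

section

variable {α : Type*} [MeasurableSpace α] {μ : Measure α}

theorem ae_eq_of_forall_isOpen_mem_imp_mem {Y : Type*} [TopologicalSpace Y]
    [SecondCountableTopology Y] [T1Space Y] {f g : α → Y}
    (h : ∀ U : Set Y, IsOpen U → ∀ᵐ x ∂μ, g x ∈ U → f x ∈ U) : f =ᵐ[μ] g := by
  have hbasis : ∀ᵐ x ∂μ, ∀ U ∈ countableBasis Y, g x ∈ U → f x ∈ U :=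
    (ae_ball_iff (countable_countableBasis Y)).2 fun U hU ↦ h U (isOpen_of_mem_countableBasis hU)
  filter_upwards [hbasis] with x hx
  by_contra hne
  obtain ⟨U, hUb, hgU, hUf⟩ := (isBasis_countableBasis Y).exists_subset_of_mem_open
    (mem_compl_singleton_iff.2 (Ne.symm hne)) isOpen_compl_singleton
  exact hUf (hx U hUb hgU) rfl

theorem ae_le_set_of_tendsto {ι : Type*} {l : Filter ι} [l.NeBot] {s t : Set α}
    {s' t' : ι → Set α} (hts : ∀ i, t' i ≤ᵐ[μ] s' i)
    (hs : Tendsto (fun i ↦ μ (s' i ∆ s)) l (𝓝 0))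
    (ht : Tendsto (fun i ↦ μ (t \ t' i)) l (𝓝 0)) :
    t ≤ᵐ[μ] s := by
  have hle : ∀ i, μ (t \ s) ≤ μ (t \ t' i) + μ (s' i ∆ s) := fun i ↦ calc
    μ (t \ s) ≤ μ (t \ t' i) + μ (t' i \ s) :=
      (measure_mono (sdiff_triangle t (t' i) s)).trans (measure_union_le _ _)
    _ ≤ μ (t \ t' i) + μ (s' i ∆ s) := by
      gcongr μ (t \ t' i) + ?_
      exact (measure_mono_ae ((hts i).diff (ae_eq_refl s).le)).trans
        (measure_mono subset_union_left)
  rw [ae_le_set, ← nonpos_iff_eq_zero]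
  simpa using ge_of_tendsto' (ht.add hs) hle

variable [IsFiniteMeasure μ]

theorem tendsto_measure_preimage_diff_preimage_of_isOpen {Y : Type*} [TopologicalSpace Y]
    [MeasurableSpace Y] [OpensMeasurableSpace Y] {ι : Type*} {l : Filter ι}
    [l.IsCountablyGenerated] {F : ι → α → Y} {F₀ : α → Y} (hF : ∀ i, Measurable (F i))
    (hF₀ : Measurable F₀) (hlim : ∀ x, Tendsto (fun i ↦ F i x) l (𝓝 (F₀ x))) {U : Set Y}
    (hU : IsOpen U) : Tendsto (fun i ↦ μ (F₀ ⁻¹' U \ F i ⁻¹' U)) l (𝓝 0) := by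
  refine measure_empty (μ := μ) ▸ tendsto_measure_of_tendsto_indicator_of_isFiniteMeasure l μ
    (fun i ↦ (hF₀ hU.measurableSet).diff (hF i hU.measurableSet)) fun x ↦ ?_
  have hmem : ∀ᶠ i in l, F₀ x ∈ U → F i x ∈ U := by
    by_cases hx : F₀ x ∈ U
    · exact ((hlim x).eventually_mem (hU.mem_nhds hx)).mono fun i hi _ ↦ hi
    · exact .of_forall fun i h ↦ absurd h hx
  exact hmem.mono fun i hi ↦ iff_of_false (fun h ↦ h.2 (hi h.1)) (notMem_empty x)

end

theorem tendsto_measure_preimage_smul_symmDiff {G X : Type*} [TopologicalSpace G]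
    [TopologicalSpace X] [MeasurableSpace X] [BorelSpace X] [R1Space X] [SMul G X]
    [ContinuousSMul G X] {μ : Measure X} [IsFiniteMeasure μ] [μ.InnerRegularCompactLTTop]
    (hmp : ∀ g : G, MeasurePreserving (fun x ↦ g • x) μ μ) {ι : Type*} {l : Filter ι}
    {c : ι → G} {a : G} (hc : Tendsto c l (𝓝 a)) {S : Set X} (hS : NullMeasurableSet S μ) :
    Tendsto (fun i ↦ μ (((fun x ↦ c i • x) ⁻¹' S) ∆ ((fun x ↦ a • x) ⁻¹' S))) l (𝓝 0) := by
  let T : G → C(X, X) := fun g ↦ ⟨(g • ·), continuous_const_smul g⟩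
  have hT : Continuous T := ContinuousMap.continuous_of_continuous_uncurry _ continuous_smul
  exact tendsto_measure_symmDiff_preimage_nhds_zero (f := fun i ↦ T (c i)) (g := T a)
    ((hT.tendsto a).comp hc) (.of_forall fun i ↦ hmp (c i)) (hmp a) hS (measure_ne_top μ S)

theorem ae_affine_of_tendsto_group_general {G X : Type*} [Group G] [TopologicalSpace G]
    [MetricSpace X] [TopologicalSpace.SeparableSpace X] [CompleteSpace X]
    [MeasurableSpace X] [BorelSpace X]
    [MulAction G X] [ContinuousSMul G X]
    (μ : Measure X) [IsFiniteMeasure μ]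
    (hmp : ∀ g : G, MeasurePreserving (fun x : X => g • x) μ μ)
    (φ : X → X) (hφ : Measurable φ)
    (an : ℕ → G) (a : G) (ha : Tendsto an atTop (nhds a))
    (bn : ℕ → G) (b : G) (hb : Tendsto bn atTop (nhds b))
    (haff : ∀ n, ∀ᵐ x ∂μ, φ (an n • x) = bn n • φ x) :
    ∀ᵐ x ∂μ, φ (a • x) = b • φ x := by
  refine ae_eq_of_forall_isOpen_mem_imp_mem fun U hU ↦ ?_
  have hsmul_φ : ∀ g : G, Measurable fun x ↦ g • φ x :=
    fun g ↦ (continuous_const_smul g).measurable.comp hφ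
  have h_translate :=
    tendsto_measure_preimage_smul_symmDiff hmp ha (hφ hU.measurableSet).nullMeasurableSet
  have h_pointwise := tendsto_measure_preimage_diff_preimage_of_isOpen (μ := μ)
    (F := fun n x ↦ bn n • φ x) (fun n ↦ hsmul_φ (bn n)) (hsmul_φ b)
    (fun x ↦ hb.smul_const (φ x)) hU
  have hts : ∀ n, (fun x ↦ bn n • φ x) ⁻¹' U ≤ᵐ[μ] (fun x ↦ an n • x) ⁻¹' (φ ⁻¹' U) :=
    fun n ↦ (haff n).mono fun x hx ↦ (congrArg (· ∈ U) hx).ge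
  exact ae_le_set_of_tendsto hts h_translate h_pointwise

/-- Let a topological group `G` act continuously on a Polish
space `X` with its Borel σ-algebra and a finite Borel measure `μ`, each
translation being measure-preserving.  Let `φ : X → X` be Borel measurable.
If `aₙ → a`, `bₙ → b` in `G`, and for each `n` we have `φ (aₙ • x) = bₙ • φ x`
for a.e. `x`, then `φ (a • x) = b • φ x` for a.e. `x`. -/
theorem ae_affine_of_tendsto_group {G X : Type*} [Group G] [TopologicalSpace G]
    [IsTopologicalGroup G]
    [MetricSpace X] [TopologicalSpace.SeparableSpace X] [CompleteSpace X]
    [MeasurableSpace X] [BorelSpace X]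
    [MulAction G X] [ContinuousSMul G X]
    (μ : Measure X) [IsFiniteMeasure μ]
    (hmp : ∀ g : G, MeasurePreserving (fun x : X => g • x) μ μ)
    (φ : X → X) (hφ : Measurable φ)
    (an : ℕ → G) (a : G) (ha : Tendsto an atTop (nhds a))
    (bn : ℕ → G) (b : G) (hb : Tendsto bn atTop (nhds b))
    (haff : ∀ n, ∀ᵐ x ∂μ, φ (an n • x) = bn n • φ x) :
    ∀ᵐ x ∂μ, φ (a • x) = b • φ x :=
  ae_affine_of_tendsto_group_general μ hmp φ hφ an a ha bn b hb haff
end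

section
/- Let G be a group and Γ a subgroup of G whose normal core is trivial (Γ contains no nontrivial normal subgroup of G). Let φ : G⧸Γ → G⧸Γ be a bijection of the space of left cosets such that: (i) for every a ∈ G there exists b ∈ G with φ(a • x) = b • φ(x) for all x ∈ G⧸Γ, and (ii) for every b ∈ G there exists a ∈ G with φ⁻¹(b • y) = a • φ⁻¹(y) for all y ∈ G⧸Γ. Then there exist an automorphism σ of G and an element c ∈ G such that φ(gΓ) = (σ(g)c)Γ for every g ∈ G; in particular c⁻¹σ(Γ)c = Γ. -/
/-!
Since `Γ` has trivial normal core, `G` acts faithfully on `G ⧸ Γ`. Hence the element `b`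
in (i) is uniquely determined by `a`, and faithfulness turns `a ↦ b` into an injective
homomorphism `σ`, which (ii) makes surjective. Writing `φ(Γ) = cΓ`, this gives
`φ(gΓ) = (σ g * c)Γ`, and comparing the stabilisers of `Γ` and `cΓ` gives `c⁻¹σ(Γ)c = Γ`.
-/

theorem Subgroup.faithfulSMul_quotient_of_normalCore_eq_bot {G : Type*} [Group G]
    {Γ : Subgroup G} (hcore : Γ.normalCore = ⊥) : FaithfulSMul G (G ⧸ Γ) := by
  refine faithfulSMul_iff.mpr fun g hg => ?_
  have hker : g ∈ Γ.normalCore := by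
    rw [Subgroup.normalCore_eq_ker]
    exact Equiv.ext hg
  rwa [hcore, Subgroup.mem_bot] at hker

theorem Equiv.exists_mulEquiv_map_smul {G X : Type*} [Group G] [MulAction G X]
    [FaithfulSMul G X] (φ : X ≃ X)
    (haff : ∀ a : G, ∃ b : G, ∀ x : X, φ (a • x) = b • φ x)
    (haff' : ∀ b : G, ∃ a : G, ∀ y : X, φ.symm (b • y) = a • φ.symm y) :
    ∃ σ : G ≃* G, ∀ (a : G) (x : X), φ (a • x) = σ a • φ x := by
  choose f hf using haff
  have hf' : ∀ (a : G) (y : X), φ (a • φ.symm y) = f a • y := fun a y => by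
    rw [hf, φ.apply_symm_apply]
  have map_mul : ∀ a₁ a₂ : G, f (a₁ * a₂) = f a₁ * f a₂ := fun a₁ a₂ =>
    eq_of_smul_eq_smul fun y => by rw [← hf', mul_smul, hf, hf', mul_smul]
  have injective : Function.Injective f := fun a₁ a₂ h =>
    eq_of_smul_eq_smul fun x => φ.injective <| by rw [hf, hf, h]
  have surjective : Function.Surjective f := fun b => by
    obtain ⟨a, ha⟩ := haff' b
    exact ⟨a, eq_of_smul_eq_smul fun y => by rw [← hf', ← ha, φ.apply_symm_apply]⟩
  exact ⟨MulEquiv.ofBijective (MonoidHom.mk' f map_mul) ⟨injective, surjective⟩, hf⟩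

theorem apply_mk_eq_mk_mul_out_of_map_smul {G : Type*} [Group G] {Γ : Subgroup G}
    {φ : G ⧸ Γ → G ⧸ Γ} {σ : G → G} (hσ : ∀ (a : G) (x : G ⧸ Γ), φ (a • x) = σ a • φ x)
    (g : G) : φ g = ((σ g * (φ ((1 : G) : G ⧸ Γ)).out : G) : G ⧸ Γ) :=
  calc φ (g : G ⧸ Γ) = σ g • φ ((1 : G) : G ⧸ Γ) := by
        rw [← hσ, MulAction.Quotient.smul_mk, smul_eq_mul, mul_one]
    _ = _ := by
        conv_lhs => rw [← QuotientGroup.out_eq' (φ _), MulAction.Quotient.smul_mk]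
        rfl

theorem conj_mem_iff_of_apply_mk_eq {G : Type*} [Group G] {Γ : Subgroup G}
    {φ : G ⧸ Γ → G ⧸ Γ} (hφ : Function.Injective φ) {σ : G →* G} {c : G}
    (hφσ : ∀ g : G, φ g = ((σ g * c : G) : G ⧸ Γ)) (g : G) :
    c⁻¹ * σ g * c ∈ Γ ↔ g ∈ Γ := by
  have h := hφ.eq_iff (a := ((1 : G) : G ⧸ Γ)) (b := g)
  rw [hφσ, hφσ, QuotientGroup.eq, QuotientGroup.eq] at h
  simpa [mul_assoc] using h

/-- Let `Γ` be a subgroup of `G` with trivial normal core and let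
`φ` be a bijection of `G⧸Γ` such that `φ` is affine for every `a ∈ G` (via some
`b ∈ G`) and `φ⁻¹` is affine for every `b ∈ G` (via some `a ∈ G`).  Then there are
an automorphism `σ` of `G` and `c ∈ G` with `φ (gΓ) = (σ g * c)Γ` for all `g`;
in particular `c⁻¹ σ(Γ) c = Γ`. -/
theorem affine_bijection_eq_automorphism {G : Type*} [Group G] (Γ : Subgroup G)
    (hcore : Γ.normalCore = ⊥)
    (φ : (G ⧸ Γ) ≃ (G ⧸ Γ))
    (haff : ∀ a : G, ∃ b : G, ∀ x : G ⧸ Γ, φ (a • x) = b • φ x)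
    (haff' : ∀ b : G, ∃ a : G, ∀ y : G ⧸ Γ, φ.symm (b • y) = a • φ.symm y) :
    ∃ (σ : G ≃* G) (c : G),
      (∀ g : G, φ (g : G ⧸ Γ) = ((σ g * c : G) : G ⧸ Γ)) ∧
      (fun x : G => c⁻¹ * x * c) '' (⇑σ '' (Γ : Set G)) = (Γ : Set G) := by
  have := Subgroup.faithfulSMul_quotient_of_normalCore_eq_bot hcore
  obtain ⟨σ, hσ⟩ := φ.exists_mulEquiv_map_smul haff haff'
  set c : G := (φ ((1 : G) : G ⧸ Γ)).out
  have hφσ := apply_mk_eq_mk_mul_out_of_map_smul hσ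
  set τ : G → G := fun g => c⁻¹ * σ g * c
  have hpre : τ ⁻¹' Γ = Γ :=
    Set.ext (conj_mem_iff_of_apply_mk_eq φ.injective (σ := σ.toMonoidHom) hφσ)
  have hτ : Function.Surjective τ := fun x =>
    ⟨σ.symm (c * x * c⁻¹), by simp [τ, mul_assoc]⟩
  refine ⟨σ, c, hφσ, ?_⟩
  calc (fun x : G => c⁻¹ * x * c) '' (σ '' Γ) = τ '' Γ := Set.image_image ..
    _ = τ '' (τ ⁻¹' Γ) := by rw [hpre]
    _ = Γ := hτ.image_preimage _
end
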